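/- arXiv:1604.02634 — 2 statements merged into one kernel-verified Lean document; each statement's English description precedes it below -/
import Mathlib

section
/- Let f₁, f₂ : K → ℝ be m-strongly convex functions, let x₁* be a minimizer of f₁ over K and x₂* a minimizer of f₂ over K, and suppose the difference d := f₁ − f₂ is L-Lipschitz on K. Then m ‖x₁* − x₂*‖² ≤ |d(x₂*) − d(x₁*)| ≤ L ‖x₁* − x₂*‖, and consequently ‖x₁* − x₂*‖ ≤ L/m. -/
/-!
At a minimizer `x₀` of an `m`-strongly convex `f` on `K`, comparing `f x₀` with the value of `f`
at `t • x + (1 - t) • x₀` and letting `t → 0` gives the quadratic growth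
`f x - f x₀ ≥ (m / 2) ‖x - x₀‖²`. Adding this growth inequality for `f₁` at `x₁` and for `f₂`
at `x₂` gives `m ‖x₁ - x₂‖² ≤ d(x₂) - d(x₁)`, and the Lipschitz bound on `d` caps the right-hand
side by `L ‖x₁ - x₂‖`.
-/

open Filter Topology Set

section

variable {E : Type*} [NormedAddCommGroup E] [NormedSpace ℝ E] {s : Set E}

lemma UniformConvexOn.le_sub_of_isMinOn {φ : ℝ → ℝ} {f : E → ℝ} {x₀ x : E}
    (hf : UniformConvexOn s φ f) (hmin : IsMinOn f s x₀) (hx₀ : x₀ ∈ s) (hx : x ∈ s) :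
    φ ‖x - x₀‖ ≤ f x - f x₀ := by
  have hshrink : ∀ t ∈ Ioo (0 : ℝ) 1, (1 - t) * φ ‖x - x₀‖ ≤ f x - f x₀ := by
    rintro t ⟨ht₀, ht₁⟩
    have hconv := hf.2 hx hx₀ ht₀.le (sub_nonneg.2 ht₁.le) (add_sub_cancel t 1)
    have hlow : f x₀ ≤ f (t • x + (1 - t) • x₀) :=
      hmin (hf.1 hx hx₀ ht₀.le (sub_nonneg.2 ht₁.le) (add_sub_cancel t 1))
    simp only [smul_eq_mul] at hconv
    have : t * ((1 - t) * φ ‖x - x₀‖) ≤ t * (f x - f x₀) := by linarith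
    exact le_of_mul_le_mul_left this ht₀
  have hlim : Tendsto (fun t : ℝ ↦ (1 - t) * φ ‖x - x₀‖) (𝓝[>] 0) (𝓝 (φ ‖x - x₀‖)) :=
    (((continuous_const.sub continuous_id).mul continuous_const).tendsto' 0 _
      (by simp)).mono_left nhdsWithin_le_nhds
  exact le_of_tendsto hlim (eventually_of_mem (Ioo_mem_nhdsGT one_pos) hshrink)

lemma StrongConvexOn.mul_norm_sub_sq_le_of_isMinOn {m : ℝ} {f₁ f₂ : E → ℝ} {x₁ x₂ : E}
    (hf₁ : StrongConvexOn s m f₁) (hf₂ : StrongConvexOn s m f₂)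
    (hmin₁ : IsMinOn f₁ s x₁) (hmin₂ : IsMinOn f₂ s x₂) (hx₁ : x₁ ∈ s) (hx₂ : x₂ ∈ s) :
    m * ‖x₁ - x₂‖ ^ 2 ≤ (f₁ x₂ - f₂ x₂) - (f₁ x₁ - f₂ x₁) := by
  have h₁ := UniformConvexOn.le_sub_of_isMinOn hf₁ hmin₁ hx₁ hx₂
  have h₂ := UniformConvexOn.le_sub_of_isMinOn hf₂ hmin₂ hx₂ hx₁
  rw [norm_sub_rev] at h₁
  linarith

end

theorem strongly_convex_minimizer_stability_general
    {E : Type*} [NormedAddCommGroup E] [InnerProductSpace ℝ E]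
    (Ks : Set E)
    (m L : ℝ) (hm : 0 < m) (hL : 0 ≤ L)
    (f₁ f₂ : E → ℝ)
    (hsc1 : ConvexOn ℝ Ks (fun x => f₁ x - m / 2 * ‖x‖ ^ 2))
    (hsc2 : ConvexOn ℝ Ks (fun x => f₂ x - m / 2 * ‖x‖ ^ 2))
    (x₁ x₂ : E) (hx₁ : x₁ ∈ Ks) (hx₂ : x₂ ∈ Ks)
    (hmin1 : ∀ x ∈ Ks, f₁ x₁ ≤ f₁ x)
    (hmin2 : ∀ x ∈ Ks, f₂ x₂ ≤ f₂ x)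
    (hlip : ∀ x ∈ Ks, ∀ y ∈ Ks, |(f₁ x - f₂ x) - (f₁ y - f₂ y)| ≤ L * ‖x - y‖) :
    m * ‖x₁ - x₂‖ ^ 2 ≤ |(f₁ x₂ - f₂ x₂) - (f₁ x₁ - f₂ x₁)| ∧
    |(f₁ x₂ - f₂ x₂) - (f₁ x₁ - f₂ x₁)| ≤ L * ‖x₁ - x₂‖ ∧
    ‖x₁ - x₂‖ ≤ L / m := by
  have hgap := StrongConvexOn.mul_norm_sub_sq_le_of_isMinOn (strongConvexOn_iff_convex.2 hsc1)
    (strongConvexOn_iff_convex.2 hsc2) hmin1 hmin2 hx₁ hx₂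
  have hlower := hgap.trans (le_abs_self _)
  have hupper : |(f₁ x₂ - f₂ x₂) - (f₁ x₁ - f₂ x₁)| ≤ L * ‖x₁ - x₂‖ :=
    norm_sub_rev x₂ x₁ ▸ hlip x₂ hx₂ x₁ hx₁
  refine ⟨hlower, hupper, ?_⟩
  rw [le_div_iff₀ hm]
  nlinarith [hlower.trans hupper]

/-- if `f₁, f₂ : K → ℝ` are `m`-strongly convex, `x₁*` minimizes `f₁` over
`K`, `x₂*` minimizes `f₂` over `K`, and `d = f₁ − f₂` is `L`-Lipschitz on `K`, then
`m ‖x₁* − x₂*‖² ≤ |d(x₂*) − d(x₁*)| ≤ L ‖x₁* − x₂*‖`, and so `‖x₁* − x₂*‖ ≤ L/m`.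
(Following the context, `g` is `m`-strongly convex on `K` iff `x ↦ g(x) − (m/2)‖x‖²` is
convex on `K`.) -/
theorem strongly_convex_minimizer_stability
    {E : Type*} [NormedAddCommGroup E] [InnerProductSpace ℝ E] [FiniteDimensional ℝ E]
    (Ks : Set E) (hKne : Ks.Nonempty) (hKconv : Convex ℝ Ks)
    (m L : ℝ) (hm : 0 < m) (hL : 0 ≤ L)
    (f₁ f₂ : E → ℝ)
    (hsc1 : ConvexOn ℝ Ks (fun x => f₁ x - m / 2 * ‖x‖ ^ 2))
    (hsc2 : ConvexOn ℝ Ks (fun x => f₂ x - m / 2 * ‖x‖ ^ 2))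
    (x₁ x₂ : E) (hx₁ : x₁ ∈ Ks) (hx₂ : x₂ ∈ Ks)
    (hmin1 : ∀ x ∈ Ks, f₁ x₁ ≤ f₁ x)
    (hmin2 : ∀ x ∈ Ks, f₂ x₂ ≤ f₂ x)
    (hlip : ∀ x ∈ Ks, ∀ y ∈ Ks, |(f₁ x - f₂ x) - (f₁ y - f₂ y)| ≤ L * ‖x - y‖) :
    m * ‖x₁ - x₂‖ ^ 2 ≤ |(f₁ x₂ - f₂ x₂) - (f₁ x₁ - f₂ x₁)| ∧
    |(f₁ x₂ - f₂ x₂) - (f₁ x₁ - f₂ x₁)| ≤ L * ‖x₁ - x₂‖ ∧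
    ‖x₁ - x₂‖ ≤ L / m :=
  strongly_convex_minimizer_stability_general Ks m L hm hL f₁ f₂ hsc1 hsc2 x₁ x₂ hx₁ hx₂ hmin1 hmin2
    hlip
end

section
/- There exists a constant c > 0, depending only on λ, m₂ and the norm bounds of V, H, R and C (but not on t or on the particular sequences), such that ‖W_{t+1} − W_t‖_F ≤ c/(t+1) for all t ≥ 1. -/
open MeasureTheory ProbabilityTheory Filter
open scoped BigOperators

noncomputable section

/-- Vectors in `ℝ^n` with the Euclidean (`ℓ₂`) norm. -/
abbrev Vec (n : ℕ) := EuclideanSpace ℝ (Fin n)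

/-- `F × K` real matrices, normed with the Frobenius norm (Euclidean norm on entries). -/
abbrev Mat (F K : ℕ) := EuclideanSpace ℝ (Fin F × Fin K)

/-- Matrix-vector product `W h`. -/
def matVec {F K : ℕ} (W : Mat F K) (h : Vec K) : Vec F :=
  (WithLp.equiv 2 _).symm (fun i => ∑ j, W (i, j) * h j)

/-- The `ℓ₁` norm of a vector. -/
def l1norm {n : ℕ} (v : Vec n) : ℝ := ∑ i, |v i|

/-- The constraint set `C`: nonnegative matrices whose columns have Euclidean norm at most 1. -/
def Cset (F K : ℕ) : Set (Mat F K) :=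
  {W | (∀ p, 0 ≤ W p) ∧ ∀ j : Fin K, Real.sqrt (∑ i, (W (i, j))^2) ≤ 1}

/-- The constraint set `R = {r : ‖r‖_∞ ≤ M}`. -/
def Rset (F : ℕ) (M : ℝ) : Set (Vec F) := {r | ∀ i, |r i| ≤ M}

/-- `ℓ̃(v, W, h, r) = (1/2) ‖v − W h − r‖₂² + λ ‖r‖₁`. -/
def elltilde {F K : ℕ} (lam : ℝ) (v : Vec F) (W : Mat F K) (h : Vec K) (r : Vec F) : ℝ :=
  (1/2) * ‖v - matVec W h - r‖^2 + lam * l1norm r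

/-- `ℓ(v, W) = min_{(h,r) ∈ H × R} ℓ̃(v, W, h, r)`. -/
def ell {F K : ℕ} (lam : ℝ) (Hs : Set (Vec K)) (Rs : Set (Vec F)) (v : Vec F) (W : Mat F K) : ℝ :=
  sInf ((fun p : Vec K × Vec F => elltilde lam v W p.1 p.2) '' (Hs ×ˢ Rs))

/-- The surrogate `f̃_t(W) = (1/t) ∑_{i=1}^t [(1/2)‖v_i − W h_i − r_i‖₂² + λ‖r_i‖₁]`. -/
def ftilde {F K : ℕ} (lam : ℝ) (v : ℕ → Vec F) (h : ℕ → Vec K) (r : ℕ → Vec F)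
    (t : ℕ) (W : Mat F K) : ℝ :=
  (t : ℝ)⁻¹ * ∑ i ∈ Finset.Icc 1 t, ((1/2) * ‖v i - matVec W (h i) - r i‖^2 + lam * l1norm (r i))

/-- The empirical loss `f_t(W) = (1/t) ∑_{i=1}^t ℓ(v_i, W)`. -/
def femp {F K : ℕ} (lam : ℝ) (Hs : Set (Vec K)) (Rs : Set (Vec F)) (v : ℕ → Vec F)
    (t : ℕ) (W : Mat F K) : ℝ :=
  (t : ℝ)⁻¹ * ∑ i ∈ Finset.Icc 1 t, ell lam Hs Rs (v i) W

/-!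
Write `S_t = t • f̃_t = ∑_{i ≤ t} ℓ̃_i`. Quadratic growth of the strongly convex `S_t` at its
minimiser `W_t`, and of `S_{t+1}` at `W_{t+1}`, add up to
`(2t+1) (m₂/2) ‖W_{t+1} - W_t‖² ≤ ℓ̃_{t+1}(W_t) - ℓ̃_{t+1}(W_{t+1})`, since `S_{t+1} - S_t = ℓ̃_{t+1}`.
On `C` the single summand `ℓ̃_{t+1}` is Lipschitz with a constant depending only on the bounds
of `V`, `H`, `R` and `C`, so one factor `‖W_{t+1} - W_t‖` cancels.
-/

lemma UniformConvexOn.add_le_of_isMinOn {E : Type*} [NormedAddCommGroup E] [NormedSpace ℝ E]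
    {s : Set E} {φ : ℝ → ℝ} {f : E → ℝ} {x y : E} (hf : UniformConvexOn s φ f)
    (hmin : IsMinOn f s x) (hx : x ∈ s) (hy : y ∈ s) :
    f x + φ ‖y - x‖ ≤ f y := by
  have hseg : ∀ a ∈ Set.Ioo (0 : ℝ) 1, f x + (1 - a) * φ ‖y - x‖ ≤ f y := by
    rintro a ⟨ha0, ha1⟩
    have hconv := hf.2 hy hx ha0.le (sub_nonneg.2 ha1.le) (add_sub_cancel a 1)
    have hle := isMinOn_iff.1 hmin _ (hf.1 hy hx ha0.le (sub_nonneg.2 ha1.le) (add_sub_cancel a 1))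
    simp only [smul_eq_mul] at hconv
    nlinarith
  have hcont : Continuous fun a : ℝ => f x + (1 - a) * φ ‖y - x‖ := by fun_prop
  exact le_of_tendsto ((hcont.tendsto' 0 _ (by simp)).mono_left nhdsWithin_le_nhds)
    (eventually_of_mem (Ioo_mem_nhdsGT one_pos) hseg)

lemma le_div_of_mul_sq_le_mul {k L d : ℝ} (hk : 0 < k) (hL : 0 ≤ L) (hd : 0 ≤ d)
    (h : k * d ^ 2 ≤ L * d) : d ≤ L / k := by
  rcases hd.eq_or_lt with rfl | hd
  · positivity
  · rw [le_div_iff₀ hk]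
    exact le_of_mul_le_mul_right (by nlinarith) hd

lemma half_sq_norm_sub_half_sq_norm_le {E : Type*} [SeminormedAddCommGroup E] {u u' : E} {B : ℝ}
    (hu : ‖u‖ ≤ B) (hu' : ‖u'‖ ≤ B) :
    1 / 2 * ‖u‖ ^ 2 - 1 / 2 * ‖u'‖ ^ 2 ≤ B * ‖u - u'‖ := by
  have := norm_sub_norm_le u u'
  nlinarith [norm_nonneg u, norm_nonneg u', norm_nonneg (u - u')]

section Dictionary

variable {F K : ℕ}

lemma matVec_sub (W W' : Mat F K) (h : Vec K) :
    matVec (W - W') h = matVec W h - matVec W' h := by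
  ext i
  simp [matVec, Finset.sum_sub_distrib, sub_mul]

lemma norm_matVec_le (W : Mat F K) (h : Vec K) : ‖matVec W h‖ ≤ ‖W‖ * ‖h‖ := by
  refine le_of_pow_le_pow_left₀ two_ne_zero (by positivity) ?_
  rw [mul_pow, EuclideanSpace.real_norm_sq_eq, EuclideanSpace.real_norm_sq_eq,
    EuclideanSpace.real_norm_sq_eq, Fintype.sum_prod_type, Finset.sum_mul]
  gcongr with i
  simpa [matVec] using Finset.sum_mul_sq_le_sq_mul_sq Finset.univ (fun j => W (i, j)) h

lemma norm_le_sqrt_of_mem_Cset {W : Mat F K} (hW : W ∈ Cset F K) : ‖W‖ ≤ √K := by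
  rw [Real.le_sqrt (norm_nonneg _) K.cast_nonneg, EuclideanSpace.real_norm_sq_eq,
    Fintype.sum_prod_type_right]
  calc ∑ j : Fin K, ∑ i, W (i, j) ^ 2 ≤ ∑ _j : Fin K, (1 : ℝ) :=
        Finset.sum_le_sum fun j _ => Real.sqrt_le_one.mp (hW.2 j)
    _ = K := by simp

lemma norm_sub_matVec_sub_le {W : Mat F K} (hW : W ∈ Cset F K) (v r : Vec F) (h : Vec K) :
    ‖v - matVec W h - r‖ ≤ ‖v‖ + √K * ‖h‖ + ‖r‖ := by
  have hWh : ‖matVec W h‖ ≤ √K * ‖h‖ :=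
    (norm_matVec_le W h).trans (by gcongr; exact norm_le_sqrt_of_mem_Cset hW)
  calc ‖v - matVec W h - r‖ ≤ ‖v‖ + ‖matVec W h‖ + ‖r‖ :=
        (norm_sub_le _ _).trans (by gcongr; exact norm_sub_le _ _)
    _ ≤ ‖v‖ + √K * ‖h‖ + ‖r‖ := by gcongr

lemma elltilde_sub_elltilde_le (lam : ℝ) (v r : Vec F) (h : Vec K) {W W' : Mat F K}
    (hW : W ∈ Cset F K) (hW' : W' ∈ Cset F K) :
    elltilde lam v W h r - elltilde lam v W' h r
      ≤ (‖v‖ + √K * ‖h‖ + ‖r‖) * ‖h‖ * ‖W - W'‖ := by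
  have hdiff : (v - matVec W h - r) - (v - matVec W' h - r) = matVec (W' - W) h := by
    rw [matVec_sub]; abel
  calc elltilde lam v W h r - elltilde lam v W' h r
      = 1 / 2 * ‖v - matVec W h - r‖ ^ 2 - 1 / 2 * ‖v - matVec W' h - r‖ ^ 2 := by
        simp only [elltilde]; ring
    _ ≤ (‖v‖ + √K * ‖h‖ + ‖r‖) * ‖matVec (W' - W) h‖ := by
        rw [← hdiff]
        exact half_sq_norm_sub_half_sq_norm_le (norm_sub_matVec_sub_le hW v r h)
          (norm_sub_matVec_sub_le hW' v r h)
    _ ≤ (‖v‖ + √K * ‖h‖ + ‖r‖) * (‖W - W'‖ * ‖h‖) := by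
        gcongr
        rw [norm_sub_rev W]
        exact norm_matVec_le _ _
    _ = (‖v‖ + √K * ‖h‖ + ‖r‖) * ‖h‖ * ‖W - W'‖ := by ring

lemma sum_elltilde_add_le_of_isMinOn {lam m : ℝ} {v r : ℕ → Vec F} {h : ℕ → Vec K} {t : ℕ}
    (ht : 1 ≤ t) (hconv : ConvexOn ℝ (Cset F K) fun X => ftilde lam v h r t X - m / 2 * ‖X‖ ^ 2)
    {W W' : Mat F K}
    (hmin : W ∈ Cset F K ∧ ∀ X ∈ Cset F K, ftilde lam v h r t W ≤ ftilde lam v h r t X)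
    (hW' : W' ∈ Cset F K) :
    ∑ i ∈ Finset.Icc 1 t, elltilde lam (v i) W (h i) (r i) + t * (m / 2) * ‖W' - W‖ ^ 2
      ≤ ∑ i ∈ Finset.Icc 1 t, elltilde lam (v i) W' (h i) (r i) := by
  have ht0 : (0 : ℝ) < t := by exact_mod_cast ht
  have hsum : ∀ X, ∑ i ∈ Finset.Icc 1 t, elltilde lam (v i) X (h i) (r i)
      = t * ftilde lam v h r t X := fun X => (mul_inv_cancel_left₀ ht0.ne' _).symm
  have hgrowth := (strongConvexOn_iff_convex.2 hconv).add_le_of_isMinOn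
    (isMinOn_iff.2 hmin.2) hmin.1 hW'
  rw [hsum, hsum]
  linarith [mul_le_mul_of_nonneg_left hgrowth ht0.le]

end Dictionary

theorem dictionary_iterates_slowly_varying_general
    (F K : ℕ)
    (lam : ℝ)
    (Vs : Set (Vec F)) (Hs : Set (Vec K)) (Rs : Set (Vec F))
    (hVb : Bornology.IsBounded Vs) (hHb : Bornology.IsBounded Hs)
    (hRb : Bornology.IsBounded Rs)
    (m₂ : ℝ) (hm₂ : 0 < m₂) :
    ∃ c : ℝ, 0 < c ∧
      ∀ (v : ℕ → Vec F) (h : ℕ → Vec K) (r : ℕ → Vec F) (W : ℕ → Mat F K),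
        (∀ i, 1 ≤ i → v i ∈ Vs) → (∀ i, 1 ≤ i → h i ∈ Hs) → (∀ i, 1 ≤ i → r i ∈ Rs) →
        -- every f̃_t is m₂-strongly convex on C
        (∀ t, 1 ≤ t →
          ConvexOn ℝ (Cset F K) (fun Wm => ftilde lam v h r t Wm - m₂ / 2 * ‖Wm‖^2)) →
        -- W_t minimizes f̃_t over C
        (∀ t, 1 ≤ t → W t ∈ Cset F K ∧
          ∀ W' ∈ Cset F K, ftilde lam v h r t (W t) ≤ ftilde lam v h r t W') →
        ∀ t, 1 ≤ t → ‖W (t+1) - W t‖ ≤ c / (t+1) := by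
  obtain ⟨BV, hBV0, hBV⟩ := hVb.exists_pos_norm_le
  obtain ⟨BH, hBH0, hBH⟩ := hHb.exists_pos_norm_le
  obtain ⟨BR, hBR0, hBR⟩ := hRb.exists_pos_norm_le
  set L := (BV + √K * BH + BR) * BH with hL_def
  refine ⟨2 * L / m₂, by positivity, ?_⟩
  intro v h r W hv hh hr hconv hmin t ht
  have hmin_succ := hmin (t + 1) (by omega)
  set d := ‖W (t + 1) - W t‖
  have growth := sum_elltilde_add_le_of_isMinOn ht (hconv t ht) (hmin t ht) hmin_succ.1
  have growth_succ := sum_elltilde_add_le_of_isMinOn (by omega) (hconv (t + 1) (by omega))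
    hmin_succ (hmin t ht).1
  rw [Finset.sum_Icc_succ_top (by omega), Finset.sum_Icc_succ_top (by omega), norm_sub_rev]
    at growth_succ
  have lip := elltilde_sub_elltilde_le lam (v (t + 1)) (r (t + 1)) (h (t + 1)) (hmin t ht).1
    hmin_succ.1
  rw [norm_sub_rev] at lip
  have hL : (‖v (t + 1)‖ + √K * ‖h (t + 1)‖ + ‖r (t + 1)‖) * ‖h (t + 1)‖ ≤ L := by
    have := hBV _ (hv (t + 1) (by omega))
    have := hBH _ (hh (t + 1) (by omega))
    have := hBR _ (hr (t + 1) (by omega))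
    rw [hL_def]
    gcongr
  have key : m₂ * (t + 1) * d ^ 2 ≤ 2 * L * d := by
    push_cast at growth_succ
    linarith [mul_le_mul_of_nonneg_right hL (norm_nonneg (W (t + 1) - W t)),
      mul_nonneg (mul_nonneg t.cast_nonneg hm₂.le) (sq_nonneg d)]
  rw [div_div]
  exact le_div_of_mul_sq_le_mul (by positivity) (by positivity) (norm_nonneg _) key

/-- Lemma 2: there is a constant `c > 0`, depending only on `λ`, `m₂` and
the norm bounds of `V`, `H`, `R` and `C` (not on `t` or on the particular sequences), such
that `‖W_{t+1} − W_t‖_F ≤ c/(t+1)` for all `t ≥ 1`. -/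
theorem dictionary_iterates_slowly_varying
    (F K : ℕ) (hF : 1 ≤ F) (hK : 1 ≤ K)
    (lam : ℝ) (hlam : 0 < lam)
    (Vs : Set (Vec F)) (Hs : Set (Vec K)) (Rs : Set (Vec F))
    (hVb : Bornology.IsBounded Vs) (hHb : Bornology.IsBounded Hs)
    (hRb : Bornology.IsBounded Rs)
    (m₂ : ℝ) (hm₂ : 0 < m₂) :
    ∃ c : ℝ, 0 < c ∧
      ∀ (v : ℕ → Vec F) (h : ℕ → Vec K) (r : ℕ → Vec F) (W : ℕ → Mat F K),
        (∀ i, 1 ≤ i → v i ∈ Vs) → (∀ i, 1 ≤ i → h i ∈ Hs) → (∀ i, 1 ≤ i → r i ∈ Rs) →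
        -- every f̃_t is m₂-strongly convex on C
        (∀ t, 1 ≤ t →
          ConvexOn ℝ (Cset F K) (fun Wm => ftilde lam v h r t Wm - m₂ / 2 * ‖Wm‖^2)) →
        -- W_t minimizes f̃_t over C
        (∀ t, 1 ≤ t → W t ∈ Cset F K ∧
          ∀ W' ∈ Cset F K, ftilde lam v h r t (W t) ≤ ftilde lam v h r t W') →
        ∀ t, 1 ≤ t → ‖W (t+1) - W t‖ ≤ c / (t+1) :=
  dictionary_iterates_slowly_varying_general F K lam Vs Hs Rs hVb hHb hRb m₂ hm₂
end
end
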